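/- Let C be a bipartite crystallization, let (i,j,k) be a permutation of (1,2,3), and let {u,v} be a j-twistor of C. Then the ji-twisting of C at {u,v} is again a bipartite crystallization; in particular, the twisting does not change the number of 3-residues: for each 3-element subset I of {0,1,2,3}, the twisted graph has the same number of I-residues as C (namely one). -/

import Mathlib

/-!
We model a (3+1)-graph on a finite nonempty vertex set `V` as a quadruple
`σ : Fin 4 → Equiv.Perm V` of fixed-point-free involutions whose generated
subgroup acts transitively on `V`.
-/

/-- `f` is a fixed-point-free involution. -/
def IsFPFInvolution {V : Type*} (f : Equiv.Perm V) : Prop :=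
  (∀ x, f x ≠ x) ∧ ∀ x, f (f x) = x

/-- `x` and `y` lie in the same `I`-residue: `y` is in the orbit of `x` under the
subgroup generated by the permutations of the colors in `I`. -/
def SameResidue {V : Type*} (σ : Fin 4 → Equiv.Perm V) (I : Set (Fin 4)) (x y : V) : Prop :=
  ∃ g ∈ Subgroup.closure (σ '' I), g x = y

/-- The set of `I`-residues (orbits on `V` of the subgroup generated by the
permutations of colors in `I`). -/
def residues {V : Type*} (σ : Fin 4 → Equiv.Perm V) (I : Set (Fin 4)) : Set (Set V) :=
  {O | ∃ x, O = {y | SameResidue σ I x y}}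

/-- The number of `I`-residues. -/
noncomputable def numResidues {V : Type*} (σ : Fin 4 → Equiv.Perm V) (I : Set (Fin 4)) : ℕ :=
  (residues σ I).ncard

/-- A (3+1)-graph: four fixed-point-free involutions generating a subgroup that acts
transitively on the vertex set. -/
def IsGraph31 {V : Type*} (σ : Fin 4 → Equiv.Perm V) : Prop :=
  (∀ c, IsFPFInvolution (σ c)) ∧ ∀ x y : V, SameResidue σ Set.univ x y

/-- `b(G)`: total number of bigons (`ij`-gons over the six unordered pairs of colors). -/
noncomputable def bCount {V : Type*} (σ : Fin 4 → Equiv.Perm V) : ℕ :=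
  ∑ p ∈ Finset.univ.filter (fun p : Fin 4 × Fin 4 => p.1 < p.2),
    numResidues σ ({p.1, p.2} : Set (Fin 4))

/-- `t(G)`: total number of 3-residues over the four 3-element subsets of colors. -/
noncomputable def tCount {V : Type*} (σ : Fin 4 → Equiv.Perm V) : ℕ :=
  ∑ c : Fin 4, numResidues σ (({c}ᶜ : Set (Fin 4)))

/-- A 3-gem: a (3+1)-graph with `v(G) + t(G) = b(G)`. -/
def IsGem {V : Type*} [Fintype V] (σ : Fin 4 → Equiv.Perm V) : Prop :=
  IsGraph31 σ ∧ Fintype.card V + tCount σ = bCount σ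

/-- A crystallization: a 3-gem with no 1-dipoles, i.e. for every color `c` and vertex `x`,
the vertices `x` and `σ c x` lie in the same `({0,1,2,3} \ {c})`-residue. -/
def IsCrystallization {V : Type*} [Fintype V] (σ : Fin 4 → Equiv.Perm V) : Prop :=
  IsGem σ ∧ ∀ (c : Fin 4) (x : V), SameResidue σ (({c}ᶜ : Set (Fin 4))) x (σ c x)

/-- `{u, v}` is a `t`-twistor of the bipartite gem `σ` (with parity map `ε`), where
`a`, `b` are the other two nonzero colors: `u ≠ v` have equal parity, lie in the same
`{0,t}`-residue and the same `{a,b}`-residue, and in distinct `{0,a}`-, `{t,b}`-,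
`{0,b}`- and `{t,a}`-residues. -/
def IsTwistor {V : Type*} (σ : Fin 4 → Equiv.Perm V) (ε : V → ZMod 2)
    (t a b : Fin 4) (u v : V) : Prop :=
  u ≠ v ∧ ε u = ε v ∧
  SameResidue σ ({0, t} : Set (Fin 4)) u v ∧
  SameResidue σ ({a, b} : Set (Fin 4)) u v ∧
  ¬ SameResidue σ ({0, a} : Set (Fin 4)) u v ∧
  ¬ SameResidue σ ({t, b} : Set (Fin 4)) u v ∧
  ¬ SameResidue σ ({0, b} : Set (Fin 4)) u v ∧
  ¬ SameResidue σ ({t, a} : Set (Fin 4)) u v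

/-- The `ji`-twisting at `{u,v}`: replace `σ i` by `τ ∘ σ i ∘ τ` and `σ j` by
`τ ∘ σ j ∘ τ`, where `τ` is the transposition exchanging `u` and `v`; the other two
permutations are unchanged. -/
def jiTwisting {V : Type*} [DecidableEq V] (σ : Fin 4 → Equiv.Perm V)
    (i j : Fin 4) (u v : V) : Fin 4 → Equiv.Perm V :=
  fun c => if c = i ∨ c = j then Equiv.swap u v * σ c * Equiv.swap u v else σ c

/-!
For two vertices of equal parity in a bipartite graph, lying in the same `ab`-gon means lying in
the same cycle of the rotation `σ b * σ a`. Conjugating `σ b` by the transposition `(u v)`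
multiplies this rotation by `(u v)` on the vertices of the parity of `u`, so it merges the two
`ab`-gons through `u` and `v` if they are distinct, splits their common `ab`-gon otherwise, and
leaves all other `ab`-gons alone. At a `j`-twistor the `ji`-twisting therefore merges the
`0i`- and `jk`-gons, splits the `0j`- and `ik`-gons, conjugates the `ij`-gons and keeps the
`0k`-gons, so `b` is unchanged. Moreover `u` and `v` now share a `0i`-gon and a `jk`-gon, hence
every 3-residue of the twisted graph; so each 3-residue of the twisted graph is a union of
3-residues of the crystallization, which are all of `V`. Thus `t = 4` on both sides and the gem
equation survives.
-/

open Equiv Equiv.Perm Function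

section

variable {V : Type*}

section Residues

variable {σ σ' : Fin 4 → Perm V} {I J : Set (Fin 4)} {x y z : V}

theorem sameResidue_refl (σ : Fin 4 → Perm V) (I : Set (Fin 4)) (x : V) :
    SameResidue σ I x x :=
  ⟨1, one_mem _, rfl⟩

theorem SameResidue.symm (h : SameResidue σ I x y) : SameResidue σ I y x := by
  obtain ⟨g, hg, rfl⟩ := h
  exact ⟨g⁻¹, inv_mem hg, by simp⟩

theorem SameResidue.trans (h : SameResidue σ I x y) (h' : SameResidue σ I y z) :
    SameResidue σ I x z := by
  obtain ⟨g, hg, rfl⟩ := h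
  obtain ⟨g', hg', rfl⟩ := h'
  exact ⟨g' * g, mul_mem hg' hg, rfl⟩

theorem sameResidue_self_apply {c : Fin 4} (hc : c ∈ I) (x : V) :
    SameResidue σ I x (σ c x) :=
  ⟨σ c, Subgroup.subset_closure ⟨c, hc, rfl⟩, rfl⟩

theorem SameResidue.mono (hIJ : I ⊆ J) (h : SameResidue σ I x y) : SameResidue σ J x y := by
  obtain ⟨g, hg, rfl⟩ := h
  exact ⟨g, Subgroup.closure_mono (Set.image_mono hIJ) hg, rfl⟩

theorem sameResidue_pair_iff {a b : Fin 4} :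
    SameResidue σ {a, b} x y ↔ ∃ g ∈ Subgroup.closure {σ a, σ b}, g x = y := by
  rw [SameResidue, Set.image_pair]

theorem SameResidue.of_forall_step {R : V → V → Prop} (hR : Equivalence R)
    (hstep : ∀ c ∈ I, ∀ x, R x (σ c x)) (h : SameResidue σ I x y) : R x y := by
  obtain ⟨g, hg, rfl⟩ := h
  suffices ∀ z, R z (g z) from this x
  induction hg using Subgroup.closure_induction with
  | mem _ hg =>
    obtain ⟨c, hc, rfl⟩ := hg
    exact hstep c hc
  | one => exact hR.refl
  | mul g g' _ _ hg hg' => exact fun z => hR.trans (hg' z) (hg (g' z))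
  | inv g _ hg => exact fun z => by simpa using hR.symm (hg (g⁻¹ z))

theorem SameResidue.mem_of_preimage_eq {T : Set V} (hT : ∀ c ∈ I, σ c ⁻¹' T = T)
    (h : SameResidue σ I x y) (hx : x ∈ T) : y ∈ T :=
  (h.of_forall_step (R := fun x y => x ∈ T ↔ y ∈ T) ⟨fun _ => Iff.rfl, Iff.symm, Iff.trans⟩
    (fun c hc x => by rw [← Set.mem_preimage, hT c hc])).1 hx

theorem preimage_setOf_sameResidue {c : Fin 4} (hc : c ∈ I) (x : V) :
    σ c ⁻¹' {y | SameResidue σ I x y} = {y | SameResidue σ I x y} := by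
  ext y
  exact ⟨fun h => h.trans (sameResidue_self_apply hc y).symm,
    fun h => h.trans (sameResidue_self_apply hc y)⟩

theorem setOf_sameResidue_eq_iff :
    {z | SameResidue σ I x z} = {z | SameResidue σ I y z} ↔ SameResidue σ I x y := by
  refine ⟨fun h => ?_, fun h => Set.ext fun z => ⟨h.symm.trans, h.trans⟩⟩
  have : y ∈ {z | SameResidue σ I y z} := sameResidue_refl σ I y
  rwa [← h] at this

theorem numResidues_congr (h : Set.EqOn σ σ' I) : numResidues σ I = numResidues σ' I := by
  simp only [numResidues, residues, SameResidue, h.image_eq]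

theorem sameResidue_conj_iff (τ : Perm V) (h : ∀ c ∈ I, σ' c = τ * σ c * τ⁻¹) :
    SameResidue σ' I x y ↔ SameResidue σ I (τ⁻¹ x) (τ⁻¹ y) := by
  constructor
  · refine SameResidue.of_forall_step (R := fun x y => SameResidue σ I (τ⁻¹ x) (τ⁻¹ y))
      ⟨fun _ => sameResidue_refl _ _ _, .symm, .trans⟩ fun c hc x => ?_
    simpa [h c hc] using sameResidue_self_apply hc (τ⁻¹ x)
  · intro hxy
    simpa using hxy.of_forall_step (R := fun x y => SameResidue σ' I (τ x) (τ y))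
      ⟨fun _ => sameResidue_refl _ _ _, .symm, .trans⟩ fun c hc x => by
        simpa [h c hc] using sameResidue_self_apply (σ := σ') hc (τ x)

theorem numResidues_conj (τ : Perm V) (h : ∀ c ∈ I, σ' c = τ * σ c * τ⁻¹) :
    numResidues σ' I = numResidues σ I := by
  have hres : residues σ' I = Set.image τ '' residues σ I := by
    ext O
    constructor
    · rintro ⟨x, rfl⟩
      refine ⟨_, ⟨τ⁻¹ x, rfl⟩, Set.ext fun y => ?_⟩
      simp [Set.mem_image_equiv, sameResidue_conj_iff τ h]
    · rintro ⟨_, ⟨x, rfl⟩, rfl⟩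
      refine ⟨τ x, Set.ext fun y => ?_⟩
      simp [Set.mem_image_equiv, sameResidue_conj_iff τ h]
  rw [numResidues, numResidues, hres,
    Set.ncard_image_of_injective _ (Set.image_injective.2 τ.injective)]

theorem numResidues_eq_one [Nonempty V] (h : ∀ x y, SameResidue σ I x y) :
    numResidues σ I = 1 := by
  have : residues σ I = {Set.univ} := by
    ext O
    simp only [residues, Set.mem_ofPred_eq, Set.mem_singleton_iff, h, Set.ofPred_true]
    exact ⟨fun ⟨_, hO⟩ => hO, fun hO => ⟨Classical.arbitrary V, hO⟩⟩
  rw [numResidues, this, Set.ncard_singleton]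

end Residues

section SwapTwist

variable [DecidableEq V] {σ σ' : Fin 4 → Perm V} {I : Set (Fin 4)} {u v x y : V}

theorem preimage_swap_eq_self {T : Set V} (h : u ∈ T ↔ v ∈ T) : swap u v ⁻¹' T = T := by
  ext x
  rw [Set.mem_preimage]
  rcases eq_or_ne x u with rfl | hxu
  · rw [swap_apply_left, h]
  rcases eq_or_ne x v with rfl | hxv
  · rw [swap_apply_right, h]
  · rw [swap_apply_of_ne_of_ne hxu hxv]

def IsSwapTwistOn (σ σ' : Fin 4 → Perm V) (u v : V) (I : Set (Fin 4)) : Prop :=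
  ∀ c ∈ I, σ' c = σ c ∨ σ' c = swap u v * σ c * swap u v

namespace IsSwapTwistOn

theorem symm (h : IsSwapTwistOn σ σ' u v I) : IsSwapTwistOn σ' σ u v I := by
  intro c hc
  rcases h c hc with h | h
  · exact .inl h.symm
  · right
    rw [h, ← mul_assoc, ← mul_assoc, swap_mul_self, one_mul, mul_assoc, swap_mul_self, mul_one]

theorem preimage_eq (h : IsSwapTwistOn σ σ' u v I) {T : Set V} (hτ : swap u v ⁻¹' T = T)
    (hT : ∀ c ∈ I, σ c ⁻¹' T = T) : ∀ c ∈ I, σ' c ⁻¹' T = T := by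
  intro c hc
  rcases h c hc with h | h
  · rw [h, hT c hc]
  · rw [h, coe_mul, coe_mul, Set.preimage_comp, Set.preimage_comp, hτ, hT c hc, hτ]

/-- A residue of `σ'` containing `u` and `v` is `swap u v`-invariant, hence a union of
residues of `σ`. -/
theorem sameResidue (h : IsSwapTwistOn σ σ' u v I) (huv : SameResidue σ' I u v)
    (hxy : SameResidue σ I x y) : SameResidue σ' I x y :=
  hxy.mem_of_preimage_eq (T := {z | SameResidue σ' I x z})
    (h.symm.preimage_eq
      (preimage_swap_eq_self ⟨fun hu => hu.trans huv, fun hv => hv.trans huv.symm⟩)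
      fun _ hc => preimage_setOf_sameResidue hc x)
    (sameResidue_refl σ' I x)

theorem sameResidue_of_not_sameResidue (h : IsSwapTwistOn σ σ' u v I) (hu : ¬ SameResidue σ I x u)
    (hv : ¬ SameResidue σ I x v) (hxy : SameResidue σ' I x y) : SameResidue σ I x y :=
  hxy.mem_of_preimage_eq (T := {z | SameResidue σ I x z})
    (h.preimage_eq (preimage_swap_eq_self (iff_of_false hu hv))
      fun _ hc => preimage_setOf_sameResidue hc x)
    (sameResidue_refl σ I x)

theorem sameResidue_or_sameResidue (h : IsSwapTwistOn σ σ' u v I) (hy : SameResidue σ' I u y) :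
    SameResidue σ I u y ∨ SameResidue σ I v y :=
  hy.mem_of_preimage_eq (T := {z | SameResidue σ I u z} ∪ {z | SameResidue σ I v z})
    (h.preimage_eq
      (preimage_swap_eq_self (iff_of_true (.inl (sameResidue_refl σ I u))
        (.inr (sameResidue_refl σ I v))))
      fun _ hc => by rw [Set.preimage_union, preimage_setOf_sameResidue hc,
        preimage_setOf_sameResidue hc])
    (.inl (sameResidue_refl σ I u))

theorem residues_eq (h : IsSwapTwistOn σ σ' u v I) (huv' : SameResidue σ' I u v) :
    residues σ' I = insert ({z | SameResidue σ I u z} ∪ {z | SameResidue σ I v z})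
      (residues σ I \ {{z | SameResidue σ I u z}, {z | SameResidue σ I v z}}) := by
  have hu : {z | SameResidue σ' I u z} =
      {z | SameResidue σ I u z} ∪ {z | SameResidue σ I v z} :=
    Set.ext fun y => ⟨h.sameResidue_or_sameResidue,
      fun hy => hy.elim (h.sameResidue huv') fun hv => huv'.trans (h.sameResidue huv' hv)⟩
  have hrest : ∀ x, ¬ SameResidue σ I u x → ¬ SameResidue σ I v x →
      {z | SameResidue σ' I x z} = {z | SameResidue σ I x z} := fun x hux hvx =>
    Set.ext fun y => ⟨h.sameResidue_of_not_sameResidue (fun h => hux h.symm) (fun h => hvx h.symm),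
      h.sameResidue huv'⟩
  ext O
  simp only [Set.mem_insert_iff, Set.mem_sdiff, Set.mem_singleton_iff, not_or]
  constructor
  · rintro ⟨x, rfl⟩
    by_cases hx : SameResidue σ' I u x
    · exact .inl (by rw [← setOf_sameResidue_eq_iff.2 hx, hu])
    · have hux : ¬ SameResidue σ I u x := fun h' => hx (h.sameResidue huv' h')
      have hvx : ¬ SameResidue σ I v x := fun h' => hx (huv'.trans (h.sameResidue huv' h'))
      rw [hrest x hux hvx, setOf_sameResidue_eq_iff, setOf_sameResidue_eq_iff]
      exact .inr ⟨⟨x, rfl⟩, fun h' => hux h'.symm, fun h' => hvx h'.symm⟩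
  · rintro (rfl | ⟨⟨x, rfl⟩, hux, hvx⟩)
    · exact ⟨u, hu.symm⟩
    · rw [setOf_sameResidue_eq_iff] at hux hvx
      exact ⟨x, (hrest x (fun h' => hux h'.symm) fun h' => hvx h'.symm).symm⟩

theorem numResidues_eq_add_one [Finite V] (h : IsSwapTwistOn σ σ' u v I)
    (huv : ¬ SameResidue σ I u v) (huv' : SameResidue σ' I u v) :
    numResidues σ I = numResidues σ' I + 1 := by
  have hne : {z | SameResidue σ I u z} ≠ {z | SameResidue σ I v z} :=
    fun h' => huv (setOf_sameResidue_eq_iff.1 h')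
  have hsub : {{z | SameResidue σ I u z}, {z | SameResidue σ I v z}} ⊆ residues σ I := by
    rintro O (rfl | rfl)
    exacts [⟨u, rfl⟩, ⟨v, rfl⟩]
  have hnotMem : {z | SameResidue σ I u z} ∪ {z | SameResidue σ I v z} ∉ residues σ I := by
    rintro ⟨x, hx⟩
    have hu : u ∈ {z | SameResidue σ I x z} := hx ▸ .inl (sameResidue_refl σ I u)
    have hv : v ∈ {z | SameResidue σ I x z} := hx ▸ .inr (sameResidue_refl σ I v)
    exact huv (hu.symm.trans hv)
  have hcard := Set.ncard_le_ncard hsub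
  rw [Set.ncard_pair hne] at hcard
  rw [numResidues, numResidues, h.residues_eq huv', Set.ncard_insert_of_notMem
    (fun h' => hnotMem h'.1), Set.ncard_sdiff hsub, Set.ncard_pair hne]
  omega

end IsSwapTwistOn

end SwapTwist

theorem exists_zpow_of_mem_closure_pair {G : Type*} [Group G] {s t g : G} (hs : s * s = 1)
    (ht : t * t = 1) (hg : g ∈ Subgroup.closure {s, t}) :
    ∃ n : ℤ, g = (t * s) ^ n ∨ g = (t * s) ^ n * s := by
  have hs' : s⁻¹ = s := inv_eq_of_mul_eq_one_right hs
  have ht' : t⁻¹ = t := inv_eq_of_mul_eq_one_right ht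
  have hconj : ∀ n : ℤ, s * (t * s) ^ n = (t * s) ^ (-n) * s := by
    have : SemiconjBy s (t * s) (t * s)⁻¹ := by
      rw [SemiconjBy, mul_inv_rev, hs', ht', mul_assoc]
    intro n
    rw [(this.zpow_right n).eq, inv_zpow', zpow_neg]
  induction hg using Subgroup.closure_induction with
  | mem g hg =>
    rcases hg with rfl | rfl
    · exact ⟨0, .inr (by rw [zpow_zero, one_mul])⟩
    · exact ⟨1, .inr (by rw [zpow_one, mul_assoc, hs, mul_one])⟩
  | one => exact ⟨0, .inl (zpow_zero _).symm⟩
  | mul g g' _ _ hg hg' =>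
    obtain ⟨m, rfl | rfl⟩ := hg <;> obtain ⟨n, rfl | rfl⟩ := hg'
    · exact ⟨m + n, .inl (zpow_add _ _ _).symm⟩
    · exact ⟨m + n, .inr (by rw [zpow_add, mul_assoc])⟩
    · exact ⟨m - n, .inr (by rw [mul_assoc, hconj, ← mul_assoc, ← zpow_add, sub_eq_add_neg])⟩
    · exact ⟨m - n, .inl (by
        rw [mul_assoc, ← mul_assoc s, hconj, mul_assoc, hs, mul_one, ← zpow_add, sub_eq_add_neg])⟩
  | inv g _ hg =>
    obtain ⟨n, rfl | rfl⟩ := hg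
    · exact ⟨-n, .inl (zpow_neg _ _).symm⟩
    · exact ⟨n, .inr (by rw [mul_inv_rev, hs', ← zpow_neg, hconj, neg_neg])⟩

theorem ZMod.two_eq_of_ne_of_ne {a b c : ZMod 2} (hab : a ≠ b) (hcb : c ≠ b) : a = c := by
  revert a b c
  decide

section Parity

variable {ε : V → ZMod 2} {s t : Perm V} {x y : V}

theorem parity_mul_apply (hs : ∀ x, ε (s x) ≠ ε x) (ht : ∀ x, ε (t x) ≠ ε x) (x : V) :
    ε ((t * s) x) = ε x :=
  ZMod.two_eq_of_ne_of_ne (ht (s x)) (hs x).symm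

theorem parity_zpow_apply {f : Perm V} (hf : ∀ x, ε (f x) = ε x) (n : ℤ) (x : V) :
    ε ((f ^ n) x) = ε x := by
  induction n using Int.induction_on generalizing x with
  | zero => rfl
  | succ n ih => rw [zpow_add_one, mul_apply, ih, hf]
  | pred n ih => rw [zpow_sub_one, mul_apply, ih]; simpa using (hf (f⁻¹ x)).symm

/-- Two parity-reversing involutions generate a dihedral group: its parity-preserving
elements are the powers of `t * s`. -/
theorem exists_mem_closure_pair_iff_sameCycle (hs : Involutive s) (ht : Involutive t)
    (hεs : ∀ x, ε (s x) ≠ ε x) (hεt : ∀ x, ε (t x) ≠ ε x) (hxy : ε x = ε y) :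
    (∃ g ∈ Subgroup.closure {s, t}, g x = y) ↔ (t * s).SameCycle x y := by
  constructor
  · rintro ⟨g, hg, rfl⟩
    obtain ⟨n, rfl | rfl⟩ := exists_zpow_of_mem_closure_pair (Perm.ext hs) (Perm.ext ht) hg
    · exact ⟨n, rfl⟩
    · refine absurd ?_ (hεs x)
      rw [hxy, mul_apply, parity_zpow_apply (parity_mul_apply hεs hεt)]
  · rintro ⟨n, rfl⟩
    exact ⟨_, zpow_mem (mul_mem (Subgroup.subset_closure (by simp))
      (Subgroup.subset_closure (by simp))) n, rfl⟩

end Parity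

section SameCycle

variable [Finite V] {f g : Perm V} {u v x y : V}

theorem sameCycle_iff_of_eqOn {S : Set V} (hS : Set.MapsTo f S S) (hfg : Set.EqOn f g S)
    (hx : x ∈ S) : f.SameCycle x y ↔ g.SameCycle x y := by
  have key : ∀ n : ℕ, (f ^ n) x = (g ^ n) x ∧ (f ^ n) x ∈ S := by
    intro n
    induction n with
    | zero => exact ⟨rfl, hx⟩
    | succ n ih =>
      rw [pow_succ', pow_succ', mul_apply, mul_apply, ← ih.1]
      exact ⟨hfg ih.2, hS ih.2⟩
  constructor
  · intro h
    obtain ⟨n, rfl⟩ := h.exists_nat_pow_eq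
    exact (key n).1 ▸ sameCycle_pow_right.2 (SameCycle.refl g x)
  · intro h
    obtain ⟨n, rfl⟩ := h.exists_nat_pow_eq
    exact (key n).1.symm ▸ sameCycle_pow_right.2 (SameCycle.refl f x)

variable [DecidableEq V]

theorem sameCycle_swap_mul_of_not_sameCycle (hf : ¬ f.SameCycle u v) :
    (swap u v * f).SameCycle u v := by
  classical
  have hex : ∃ m, 0 < m ∧ (f ^ m) v = v :=
    ⟨orderOf f, orderOf_pos f, by rw [pow_orderOf_eq_one]; rfl⟩
  obtain ⟨hm0, hmv⟩ := Nat.find_spec hex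
  have hpow : ∀ n < Nat.find hex, ((swap u v * f) ^ n) v = (f ^ n) v := by
    intro n
    induction n with
    | zero => simp
    | succ n ih =>
      intro hn
      rw [pow_succ', mul_apply, ih (by omega), mul_apply, ← mul_apply f, ← pow_succ']
      refine swap_apply_of_ne_of_ne (fun h => hf ?_) fun h => Nat.find_min hex hn ⟨n.succ_pos, h⟩
      exact (h ▸ sameCycle_pow_right.2 (SameCycle.refl f v)).symm
  obtain ⟨m, hm⟩ : ∃ m, Nat.find hex = m + 1 := ⟨Nat.find hex - 1, by omega⟩
  have : ((swap u v * f) ^ (m + 1)) v = u := by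
    rw [pow_succ', mul_apply, hpow m (by omega), mul_apply, ← mul_apply f, ← pow_succ', ← hm, hmv,
      swap_apply_right]
  exact (this ▸ sameCycle_pow_right.2 (SameCycle.refl _ v)).symm

theorem not_sameCycle_swap_mul_of_sameCycle (hne : u ≠ v) (hf : f.SameCycle u v) :
    ¬ (swap u v * f).SameCycle u v := by
  classical
  have hex : ∃ r, 0 < r ∧ (f ^ r) u = v := by
    obtain ⟨r, hr0, -, hr⟩ := hf.exists_pow_eq''
    exact ⟨r, hr0, hr⟩
  set r := Nat.find hex
  obtain ⟨hr0, hrv⟩ : 0 < r ∧ (f ^ r) u = v := Nat.find_spec hex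
  have hne_v : ∀ k < r, (f ^ k) u ≠ v := by
    rintro (_ | k) hk h
    exacts [hne h, Nat.find_min hex hk ⟨k.succ_pos, h⟩]
  have hne_u : ∀ k, 0 < k → k < r → (f ^ k) u ≠ u := by
    intro k hk0 hk h
    refine hne_v (r - k) (by omega) ?_
    rw [← hrv, ← h, ← mul_apply, ← pow_add, Nat.sub_add_cancel hk.le, h]
  -- the `swap u v * f`-orbit of `u` is the arc `u, f u, …, f^(r-1) u` of the `f`-cycle
  have hmaps : ∀ k < r, ∃ l < r, (swap u v * f) ((f ^ k) u) = (f ^ l) u := by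
    intro k hk
    rw [mul_apply, ← mul_apply f, ← pow_succ']
    rcases Nat.lt_or_ge (k + 1) r with hk1 | hk1
    · exact ⟨k + 1, hk1, swap_apply_of_ne_of_ne (hne_u _ k.succ_pos hk1) (hne_v _ hk1)⟩
    · exact ⟨0, hr0, by rw [show k + 1 = r by omega, hrv, swap_apply_right, pow_zero, one_apply]⟩
  have horbit : ∀ n : ℕ, ∃ l < r, ((swap u v * f) ^ n) u = (f ^ l) u := by
    intro n
    induction n with
    | zero => exact ⟨0, hr0, rfl⟩
    | succ n ih =>
      obtain ⟨l, hl, hl'⟩ := ih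
      rw [pow_succ', mul_apply, hl']
      exact hmaps l hl
  rintro hg
  obtain ⟨n, hn⟩ := hg.exists_nat_pow_eq
  obtain ⟨l, hl, hl'⟩ := horbit n
  exact hne_v l hl (hl' ▸ hn)

theorem sameCycle_swap_mul_iff (hne : u ≠ v) :
    (swap u v * f).SameCycle u v ↔ ¬ f.SameCycle u v :=
  ⟨fun hg hf => not_sameCycle_swap_mul_of_sameCycle hne hf hg,
    sameCycle_swap_mul_of_not_sameCycle⟩

end SameCycle

theorem IsFPFInvolution.conj {f : Perm V} (τ : Perm V) (hf : IsFPFInvolution f) :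
    IsFPFInvolution (τ * f * τ⁻¹) := by
  refine ⟨fun x h => hf.1 (τ⁻¹ x) ?_, fun x => by simp [hf.2 _]⟩
  simpa using congrArg (⇑τ⁻¹) h

section Twisting

variable [DecidableEq V] {σ σ' : Fin 4 → Perm V} {ε : V → ZMod 2} {u v : V}

theorem parity_swap_apply (hε : ε u = ε v) (x : V) : ε (swap u v x) = ε x := by
  rcases eq_or_ne x u with rfl | hxu
  · rw [swap_apply_left, hε]
  rcases eq_or_ne x v with rfl | hxv
  · rw [swap_apply_right, hε]
  · rw [swap_apply_of_ne_of_ne hxu hxv]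

theorem parity_swap_conj_apply {f : Perm V} (hε : ε u = ε v) (hf : ∀ x, ε (f x) ≠ ε x)
    (x : V) : ε ((swap u v * f * swap u v) x) ≠ ε x := by
  simpa [parity_swap_apply hε] using hf (swap u v x)

theorem IsSwapTwistOn.isFPFInvolution (h : IsSwapTwistOn σ σ' u v Set.univ)
    (hσ : ∀ c, IsFPFInvolution (σ c)) (c : Fin 4) : IsFPFInvolution (σ' c) := by
  rcases h c trivial with h | h
  · exact h ▸ hσ c
  · simpa [h] using (hσ c).conj (swap u v)

theorem IsSwapTwistOn.parity (h : IsSwapTwistOn σ σ' u v Set.univ) (hε : ε u = ε v)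
    (hbip : ∀ c x, ε (σ c x) ≠ ε x) (c : Fin 4) (x : V) : ε (σ' c x) ≠ ε x := by
  rcases h c trivial with h | h
  · exact h ▸ hbip c x
  · exact h ▸ parity_swap_conj_apply hε (hbip c) x

variable {a b : Fin 4}

theorem isSwapTwistOn_pair (ha : σ' a = σ a) (hb : σ' b = swap u v * σ b * swap u v) :
    IsSwapTwistOn σ σ' u v {a, b} := by
  rintro c (rfl | rfl) <;> simp [ha, hb]

variable [Finite V]

/-- On the vertices of the parity of `u`, the twisted rotation `σ' b * σ' a` is
`swap u v * (σ b * σ a)`. -/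
theorem sameResidue_pair_twist_iff (hσ : ∀ c, IsFPFInvolution (σ c))
    (hbip : ∀ c x, ε (σ c x) ≠ ε x) (hne : u ≠ v) (hε : ε u = ε v) (ha : σ' a = σ a)
    (hb : σ' b = swap u v * σ b * swap u v) :
    SameResidue σ' {a, b} u v ↔ ¬ SameResidue σ {a, b} u v := by
  have hb' : IsFPFInvolution (swap u v * σ b * swap u v) := by
    simpa using (hσ b).conj (swap u v)
  rw [sameResidue_pair_iff, sameResidue_pair_iff, ha, hb,
    exists_mem_closure_pair_iff_sameCycle (hσ a).2 hb'.2 (hbip a)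
      (parity_swap_conj_apply hε (hbip b)) hε,
    exists_mem_closure_pair_iff_sameCycle (hσ a).2 (hσ b).2 (hbip a) (hbip b) hε,
    ← sameCycle_swap_mul_iff hne]
  refine sameCycle_iff_of_eqOn (S := {x | ε x = ε u}) (fun x hx => ?_) (fun x hx => ?_) rfl
  · exact (parity_mul_apply (hbip a) (parity_swap_conj_apply hε (hbip b)) x).trans hx
  · have hau : σ a x ≠ u := fun h => hbip a x (h ▸ hx.symm)
    have hav : σ a x ≠ v := fun h => hbip a x (h ▸ (hx.trans hε).symm)
    simp [swap_apply_of_ne_of_ne hau hav]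

theorem numResidues_pair_twist_of_not_sameResidue (hσ : ∀ c, IsFPFInvolution (σ c))
    (hbip : ∀ c x, ε (σ c x) ≠ ε x) (hne : u ≠ v) (hε : ε u = ε v) (ha : σ' a = σ a)
    (hb : σ' b = swap u v * σ b * swap u v) (huv : ¬ SameResidue σ {a, b} u v) :
    numResidues σ {a, b} = numResidues σ' {a, b} + 1 :=
  (isSwapTwistOn_pair ha hb).numResidues_eq_add_one huv
    ((sameResidue_pair_twist_iff hσ hbip hne hε ha hb).2 huv)

theorem numResidues_pair_twist_of_sameResidue (hσ : ∀ c, IsFPFInvolution (σ c))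
    (hbip : ∀ c x, ε (σ c x) ≠ ε x) (hne : u ≠ v) (hε : ε u = ε v) (ha : σ' a = σ a)
    (hb : σ' b = swap u v * σ b * swap u v) (huv : SameResidue σ {a, b} u v) :
    numResidues σ' {a, b} = numResidues σ {a, b} + 1 :=
  (isSwapTwistOn_pair ha hb).symm.numResidues_eq_add_one
    (fun h => (sameResidue_pair_twist_iff hσ hbip hne hε ha hb).1 h huv) huv

end Twisting

section Crystallization

variable {σ σ' : Fin 4 → Perm V}

theorem IsCrystallization.sameResidue_compl [Fintype V] (h : IsCrystallization σ) (c : Fin 4)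
    (x y : V) : SameResidue σ {c}ᶜ x y := by
  refine (h.1.1.2 x y).of_forall_step ⟨sameResidue_refl σ _, .symm, .trans⟩ fun d _ x => ?_
  by_cases hd : d = c
  · exact hd ▸ h.2 d x
  · exact sameResidue_self_apply hd x

theorem tCount_eq_four [Nonempty V] (h : ∀ c x y, SameResidue σ {c}ᶜ x y) : tCount σ = 4 := by
  simp [tCount, numResidues_eq_one (h _)]

theorem IsCrystallization.of_bCount_eq [Fintype V] [Nonempty V] (hσ : IsCrystallization σ)
    (hσ' : ∀ c, IsFPFInvolution (σ' c)) (hb : bCount σ' = bCount σ)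
    (h3 : ∀ c x y, SameResidue σ' {c}ᶜ x y) : IsCrystallization σ' := by
  refine ⟨⟨⟨hσ', fun x y => (h3 0 x y).mono (Set.subset_univ _)⟩, ?_⟩, fun c x => h3 c x _⟩
  rw [tCount_eq_four h3, hb, ← tCount_eq_four hσ.sameResidue_compl]
  exact hσ.1.2

end Crystallization

section ColorPermutation

variable {i j k : Fin 4}

theorem mem_perms_of_eq_one_two_three (h : ({i, j, k} : Finset (Fin 4)) = {1, 2, 3}) :
    (i, j, k) ∈ ({(1, 2, 3), (1, 3, 2), (2, 1, 3), (2, 3, 1), (3, 1, 2), (3, 2, 1)} :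
      Finset (Fin 4 × Fin 4 × Fin 4)) := by
  revert i j k
  decide

theorem ne_of_eq_one_two_three (h : ({i, j, k} : Finset (Fin 4)) = {1, 2, 3}) :
    i ≠ 0 ∧ j ≠ 0 ∧ k ≠ 0 ∧ i ≠ j ∧ i ≠ k ∧ j ≠ k := by
  revert i j k
  decide

theorem bCount_eq_of_perm (σ : Fin 4 → Perm V) (h : ({i, j, k} : Finset (Fin 4)) = {1, 2, 3}) :
    bCount σ = numResidues σ {0, i} + numResidues σ {0, j} + numResidues σ {0, k} +
      numResidues σ {i, j} + numResidues σ {i, k} + numResidues σ {j, k} := by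
  have hpairs : Finset.univ.filter (fun p : Fin 4 × Fin 4 => p.1 < p.2) =
      {(0, 1), (0, 2), (0, 3), (1, 2), (1, 3), (2, 3)} := by decide
  have := mem_perms_of_eq_one_two_three h
  simp only [Finset.mem_insert, Finset.mem_singleton, Prod.mk.injEq] at this
  rcases this with ⟨rfl, rfl, rfl⟩ | ⟨rfl, rfl, rfl⟩ | ⟨rfl, rfl, rfl⟩ | ⟨rfl, rfl, rfl⟩ |
    ⟨rfl, rfl, rfl⟩ | ⟨rfl, rfl, rfl⟩ <;>
  simp [bCount, hpairs, Set.pair_comm (2 : Fin 4) 1, Set.pair_comm (3 : Fin 4) 1,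
    Set.pair_comm (3 : Fin 4) 2] <;> omega

end ColorPermutation

section JiTwisting

variable [DecidableEq V] {σ : Fin 4 → Perm V} {i j c : Fin 4} {u v : V}

theorem isSwapTwistOn_jiTwisting (σ : Fin 4 → Perm V) (i j : Fin 4) (u v : V)
    (I : Set (Fin 4)) : IsSwapTwistOn σ (jiTwisting σ i j u v) u v I := by
  intro c _
  unfold jiTwisting
  split_ifs
  exacts [.inr rfl, .inl rfl]

theorem jiTwisting_apply_left : jiTwisting σ i j u v i = swap u v * σ i * swap u v :=
  if_pos (.inl rfl)

theorem jiTwisting_apply_right : jiTwisting σ i j u v j = swap u v * σ j * swap u v :=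
  if_pos (.inr rfl)

theorem jiTwisting_apply_of_ne (hi : c ≠ i) (hj : c ≠ j) : jiTwisting σ i j u v c = σ c :=
  if_neg (by tauto)

end JiTwisting

section Twistor

variable {σ : Fin 4 → Perm V} {ε : V → ZMod 2} {i j k : Fin 4} {u v : V}

theorem bCount_jiTwisting [Finite V] [DecidableEq V] (hσ : ∀ c, IsFPFInvolution (σ c))
    (hbip : ∀ c x, ε (σ c x) ≠ ε x) (hperm : ({i, j, k} : Finset (Fin 4)) = {1, 2, 3})
    (htw : IsTwistor σ ε j i k u v) : bCount (jiTwisting σ i j u v) = bCount σ := by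
  obtain ⟨hne, hε, h0j, hik, hn0i, hnjk, -, -⟩ := htw
  obtain ⟨hi0, hj0, -, -, hki, hkj⟩ := ne_of_eq_one_two_three hperm
  have h0 : jiTwisting σ i j u v 0 = σ 0 := jiTwisting_apply_of_ne hi0.symm hj0.symm
  have hk : jiTwisting σ i j u v k = σ k := jiTwisting_apply_of_ne hki.symm hkj.symm
  rw [Set.pair_comm] at hik hnjk
  have e0i := numResidues_pair_twist_of_not_sameResidue hσ hbip hne hε h0
    jiTwisting_apply_left hn0i
  have e0j := numResidues_pair_twist_of_sameResidue hσ hbip hne hε h0 jiTwisting_apply_right h0j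
  have e0k := numResidues_congr (σ := jiTwisting σ i j u v) (σ' := σ) (I := {0, k})
    (by rintro c (rfl | rfl) <;> assumption)
  have eij := numResidues_conj (swap u v) (σ := σ) (σ' := jiTwisting σ i j u v) (I := {i, j})
    (by rintro c (rfl | rfl) <;> simp [jiTwisting_apply_left, jiTwisting_apply_right])
  have eik := numResidues_pair_twist_of_sameResidue hσ hbip hne hε hk jiTwisting_apply_left hik
  have ejk := numResidues_pair_twist_of_not_sameResidue hσ hbip hne hε hk
    jiTwisting_apply_right hnjk
  rw [Set.pair_comm k] at eik ejk
  rw [bCount_eq_of_perm σ hperm, bCount_eq_of_perm _ hperm]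
  omega

/-- The twisted graph joins `u` and `v` in the `0i`-gons and the `jk`-gons, one of which
avoids any given color. -/
theorem sameResidue_compl_jiTwisting [Fintype V] [DecidableEq V] (hcr : IsCrystallization σ)
    (hbip : ∀ c x, ε (σ c x) ≠ ε x) (hperm : ({i, j, k} : Finset (Fin 4)) = {1, 2, 3})
    (htw : IsTwistor σ ε j i k u v) (c : Fin 4) (x y : V) :
    SameResidue (jiTwisting σ i j u v) {c}ᶜ x y := by
  obtain ⟨hne, hε, -, -, hn0i, hnjk, -, -⟩ := htw
  obtain ⟨hi0, hj0, hk0, hij, hik, hjk⟩ := ne_of_eq_one_two_three hperm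
  have h0i : SameResidue (jiTwisting σ i j u v) {0, i} u v :=
    (sameResidue_pair_twist_iff hcr.1.1.1 hbip hne hε (jiTwisting_apply_of_ne hi0.symm hj0.symm)
      jiTwisting_apply_left).2 hn0i
  have hjk' : SameResidue (jiTwisting σ i j u v) {k, j} u v := by
    rw [Set.pair_comm] at hnjk
    exact (sameResidue_pair_twist_iff hcr.1.1.1 hbip hne hε
      (jiTwisting_apply_of_ne hik.symm hjk.symm) jiTwisting_apply_right).2 hnjk
  have huv : SameResidue (jiTwisting σ i j u v) {c}ᶜ u v := by
    by_cases hc : c = 0 ∨ c = i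
    · refine hjk'.mono (Set.subset_compl_singleton_iff.2 ?_)
      rcases hc with rfl | rfl <;> simp [hj0.symm, hk0.symm, hij, hik]
    · exact h0i.mono (Set.subset_compl_singleton_iff.2 (by simpa using hc))
  exact (isSwapTwistOn_jiTwisting σ i j u v _).sameResidue huv (hcr.sameResidue_compl c x y)

end Twistor

end

/-- Let `C` be a bipartite crystallization, `(i,j,k)` a permutation of
`(1,2,3)`, and `{u,v}` a `j`-twistor of `C`. Then the `ji`-twisting of `C` at `{u,v}` is
again a bipartite crystallization; in particular the twisting does not change the number
of 3-residues: for each 3-element subset `I` of the colors, the twisted graph has the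
same number of `I`-residues as `C`, namely one. -/
theorem jiTwisting_isCrystallization {V : Type*} [Fintype V] [DecidableEq V] [Nonempty V]
    (σ : Fin 4 → Equiv.Perm V) (ε : V → ZMod 2)
    (hcr : IsCrystallization σ) (hbip : ∀ (c : Fin 4) (x : V), ε (σ c x) ≠ ε x)
    (i j k : Fin 4) (hperm : ({i, j, k} : Finset (Fin 4)) = ({1, 2, 3} : Finset (Fin 4)))
    (u v : V) (htw : IsTwistor σ ε j i k u v) :
    IsCrystallization (jiTwisting σ i j u v) ∧
    (∀ (c : Fin 4) (x : V), ε (jiTwisting σ i j u v c x) ≠ ε x) ∧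
    ∀ c : Fin 4,
      numResidues (jiTwisting σ i j u v) (({c}ᶜ : Set (Fin 4))) =
        numResidues σ (({c}ᶜ : Set (Fin 4))) ∧
      numResidues (jiTwisting σ i j u v) (({c}ᶜ : Set (Fin 4))) = 1 := by
  have htwist := isSwapTwistOn_jiTwisting σ i j u v Set.univ
  have h3 := sameResidue_compl_jiTwisting hcr hbip hperm htw
  have hone : ∀ c, numResidues (jiTwisting σ i j u v) {c}ᶜ = 1 :=
    fun c => numResidues_eq_one (h3 c)
  refine ⟨hcr.of_bCount_eq (htwist.isFPFInvolution hcr.1.1.1)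
      (bCount_jiTwisting hcr.1.1.1 hbip hperm htw) h3,
    htwist.parity htw.2.1 hbip, fun c => ⟨?_, hone c⟩⟩
  rw [hone c, numResidues_eq_one (hcr.sameResidue_compl c)]
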